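/- arXiv:2108.09749 — 4 statements merged into one kernel-verified Lean document; each statement's English description precedes it below -/
import Mathlib

section
/- Let d be a positive natural number, let F_k, F_g : ℝ^d → ℝ be differentiable, let η > 0, L > 0, δ ≥ 0. Assume the gradient of F_k is L-Lipschitz and ‖∇F_k(x) − ∇F_g(x)‖ ≤ δ for all x ∈ ℝ^d. Define sequences w, v : ℕ → ℝ^d by w(0) = v(0) = w₀ for some w₀ ∈ ℝ^d, and for e ≥ 1: w(e) = w(e−1) − η·∇F_k(w(e−1)) and v(e) = v(e−1) − η·∇F_g(v(e−1)). Then for every e ∈ ℕ, ‖w(e) − v(e)‖ ≤ (δ/L)·((η·L + 1)^e − 1). -/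
/-- Lemma 2: divergence between the local model (gradient descent on `Fk`) and the virtual
group model (gradient descent on `Fg`), both started at `w₀`, after `e` local epochs. -/
theorem local_model_divergence_bound (d : ℕ) (hd : 0 < d)
    (Fk Fg : EuclideanSpace ℝ (Fin d) → ℝ) (η L δ : ℝ)
    (hη : 0 < η) (hL : 0 < L) (hδ : 0 ≤ δ)
    (hdiffk : Differentiable ℝ Fk) (hdiffg : Differentiable ℝ Fg)
    (hgradlip : ∀ w v : EuclideanSpace ℝ (Fin d),
      ‖gradient Fk w - gradient Fk v‖ ≤ L * ‖w - v‖)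
    (hdiv : ∀ x : EuclideanSpace ℝ (Fin d), ‖gradient Fk x - gradient Fg x‖ ≤ δ)
    (w₀ : EuclideanSpace ℝ (Fin d)) (w v : ℕ → EuclideanSpace ℝ (Fin d))
    (hw0 : w 0 = w₀) (hv0 : v 0 = w₀)
    (hw : ∀ e : ℕ, w (e + 1) = w e - η • gradient Fk (w e))
    (hv : ∀ e : ℕ, v (e + 1) = v e - η • gradient Fg (v e)) :
    ∀ e : ℕ, ‖w e - v e‖ ≤ (δ / L) * ((η * L + 1) ^ e - 1) := by
  intro e
  induction e with
  | zero => simp [hw0, hv0]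
  | succ e ih =>
    have key : w (e+1) - v (e+1) =
        ((w e - v e) - η • (gradient Fk (w e) - gradient Fk (v e)))
          + (-(η • (gradient Fk (v e) - gradient Fg (v e)))) := by
      rw [hw, hv]
      module
    have h1 : ‖(w e - v e) - η • (gradient Fk (w e) - gradient Fk (v e))‖
        ≤ ‖w e - v e‖ + η * (L * ‖w e - v e‖) := by
      calc ‖(w e - v e) - η • (gradient Fk (w e) - gradient Fk (v e))‖
          ≤ ‖w e - v e‖ + ‖η • (gradient Fk (w e) - gradient Fk (v e))‖ :=
            norm_sub_le _ _
        _ ≤ ‖w e - v e‖ + η * (L * ‖w e - v e‖) := by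
            rw [norm_smul, Real.norm_of_nonneg hη.le]
            have := hgradlip (w e) (v e)
            nlinarith
    have h2 : ‖-(η • (gradient Fk (v e) - gradient Fg (v e)))‖ ≤ η * δ := by
      rw [norm_neg, norm_smul, Real.norm_of_nonneg hη.le]
      have := hdiv (v e)
      nlinarith
    have hb : ‖w (e+1) - v (e+1)‖ ≤ (1 + η * L) * ‖w e - v e‖ + η * δ := by
      rw [key]
      calc _ ≤ ‖(w e - v e) - η • (gradient Fk (w e) - gradient Fk (v e))‖
              + ‖-(η • (gradient Fk (v e) - gradient Fg (v e)))‖ := norm_add_le _ _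
        _ ≤ (1 + η * L) * ‖w e - v e‖ + η * δ := by nlinarith
    have hpow : (1:ℝ) ≤ (η * L + 1) ^ e := one_le_pow₀ (by nlinarith)
    calc ‖w (e+1) - v (e+1)‖ ≤ (1 + η * L) * ‖w e - v e‖ + η * δ := hb
      _ ≤ (1 + η * L) * ((δ / L) * ((η * L + 1) ^ e - 1)) + η * δ := by
          have := mul_le_mul_of_nonneg_left ih (by nlinarith : (0:ℝ) ≤ 1 + η * L)
          linarith
      _ = (δ / L) * ((η * L + 1) ^ (e+1) - 1) := by
          field_simp
          ring
end

section
/- Let d be a positive natural number, let K be a nonempty finite index set, let η > 0, L > 0, and let E ∈ ℕ. For each k ∈ K let F_k : ℝ^d → ℝ be differentiable with L-Lipschitz gradient, let δ_k ≥ 0 satisfy ‖∇F_k(x) − ∇F_g(x)‖ ≤ δ_k for all x, where F_g : ℝ^d → ℝ is differentiable, and let p_k ≥ 0 with ∑_{k∈K} p_k = 1. Starting from a common point w₀ ∈ ℝ^d, define for each k the sequence w^k(0) = w₀, w^k(e) = w^k(e−1) − η·∇F_k(w^k(e−1)), and the virtual sequence v(0) = w₀, v(e) = v(e−1) − η·∇F_g(v(e−1)).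 Then the aggregated group model w_g := ∑_{k∈K} p_k · w^k(E) satisfies ‖w_g − v(E)‖ ≤ ((∑_{k∈K} p_k·δ_k)/L)·((η·L + 1)^E − 1). -/
open scoped BigOperators

/-- Eq. (17): the FedAvg-aggregated group model after `E` local epochs stays close to the
virtual group model. -/
theorem aggregated_model_divergence_bound (d : ℕ) (hd : 0 < d) (K : Type) [Fintype K]
    [Nonempty K] (η L : ℝ) (E : ℕ) (hη : 0 < η) (hL : 0 < L)
    (F : K → EuclideanSpace ℝ (Fin d) → ℝ) (Fg : EuclideanSpace ℝ (Fin d) → ℝ)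
    (δ : K → ℝ) (p : K → ℝ)
    (hdiffk : ∀ k, Differentiable ℝ (F k)) (hdiffg : Differentiable ℝ Fg)
    (hgradlip : ∀ k, ∀ w v : EuclideanSpace ℝ (Fin d),
      ‖gradient (F k) w - gradient (F k) v‖ ≤ L * ‖w - v‖)
    (hδ : ∀ k, 0 ≤ δ k)
    (hdiv : ∀ k, ∀ x : EuclideanSpace ℝ (Fin d), ‖gradient (F k) x - gradient Fg x‖ ≤ δ k)
    (hp : ∀ k, 0 ≤ p k) (hpsum : ∑ k, p k = 1)
    (w₀ : EuclideanSpace ℝ (Fin d)) (w : K → ℕ → EuclideanSpace ℝ (Fin d))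
    (v : ℕ → EuclideanSpace ℝ (Fin d))
    (hw0 : ∀ k, w k 0 = w₀) (hv0 : v 0 = w₀)
    (hw : ∀ k, ∀ e : ℕ, w k (e + 1) = w k e - η • gradient (F k) (w k e))
    (hv : ∀ e : ℕ, v (e + 1) = v e - η • gradient Fg (v e)) :
    ‖(∑ k, p k • w k E) - v E‖ ≤ ((∑ k, p k * δ k) / L) * ((η * L + 1) ^ E - 1) := by
  have key : ∀ k, ∀ e : ℕ, ‖w k e - v e‖ ≤ (δ k / L) * ((η * L + 1) ^ e - 1) := by
    intro k e
    induction e with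
    | zero => simp [hw0, hv0]
    | succ e ih =>
      have h1 : w k (e + 1) - v (e + 1)
          = (w k e - v e) - η • (gradient (F k) (w k e) - gradient Fg (v e)) := by
        rw [hw, hv]
        simp [smul_sub]
        abel
      have h2 : ‖gradient (F k) (w k e) - gradient Fg (v e)‖
          ≤ L * ‖w k e - v e‖ + δ k := by
        calc ‖gradient (F k) (w k e) - gradient Fg (v e)‖
            = ‖(gradient (F k) (w k e) - gradient (F k) (v e))
                + (gradient (F k) (v e) - gradient Fg (v e))‖ := by abel_nf
          _ ≤ ‖gradient (F k) (w k e) - gradient (F k) (v e)‖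
                + ‖gradient (F k) (v e) - gradient Fg (v e)‖ := norm_add_le _ _
          _ ≤ L * ‖w k e - v e‖ + δ k := add_le_add (hgradlip k _ _) (hdiv k _)
      have h3 : ‖w k (e + 1) - v (e + 1)‖
          ≤ ‖w k e - v e‖ + η * (L * ‖w k e - v e‖ + δ k) := by
        rw [h1]
        calc ‖(w k e - v e) - η • (gradient (F k) (w k e) - gradient Fg (v e))‖
            ≤ ‖w k e - v e‖ + ‖η • (gradient (F k) (w k e) - gradient Fg (v e))‖ :=
              norm_sub_le _ _
          _ = ‖w k e - v e‖ + η * ‖gradient (F k) (w k e) - gradient Fg (v e)‖ := by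
              rw [norm_smul, Real.norm_of_nonneg hη.le]
          _ ≤ ‖w k e - v e‖ + η * (L * ‖w k e - v e‖ + δ k) := by
              gcongr
      have hx : (0:ℝ) ≤ η * L := by positivity
      have hrec : ‖w k e - v e‖ + η * (L * ‖w k e - v e‖ + δ k)
          ≤ (δ k / L) * ((η * L + 1) ^ (e + 1) - 1) := by
        have hpow : (δ k / L) * ((η * L + 1) ^ (e + 1) - 1)
            = (η * L + 1) * ((δ k / L) * ((η * L + 1) ^ e - 1)) + η * δ k := by
          field_simp
          ring
        have h1' : (1 + η * L) * ‖w k e - v e‖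
            ≤ (η * L + 1) * ((δ k / L) * ((η * L + 1) ^ e - 1)) := by
          have : (0:ℝ) ≤ η * L + 1 := by positivity
          nlinarith [ih]
        nlinarith [h1']
      exact h3.trans hrec
  have hsum : (∑ k, p k • w k E) - v E = ∑ k, p k • (w k E - v E) := by
    simp [smul_sub, Finset.sum_sub_distrib, ← Finset.sum_smul, hpsum]
  rw [hsum]
  calc ‖∑ k, p k • (w k E - v E)‖ ≤ ∑ k, ‖p k • (w k E - v E)‖ :=
        norm_sum_le _ _
    _ = ∑ k, p k * ‖w k E - v E‖ := by
        simp [norm_smul, Real.norm_of_nonneg (hp _)]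
    _ ≤ ∑ k, p k * ((δ k / L) * ((η * L + 1) ^ E - 1)) := by
        apply Finset.sum_le_sum
        intro k _
        exact mul_le_mul_of_nonneg_left (key k E) (hp k)
    _ = ((∑ k, p k * δ k) / L) * ((η * L + 1) ^ E - 1) := by
        rw [Finset.sum_div, Finset.sum_mul]
        apply Finset.sum_congr rfl
        intro k _
        field_simp
end

section
/- Let d be a positive natural number, let K be a nonempty finite index set, let η > 0, L > 0, M ≥ 0, and let E ∈ ℕ. For each k ∈ K let F_k : ℝ^d → ℝ be differentiable with L-Lipschitz gradient, let δ_k ≥ 0 satisfy ‖∇F_k(x) − ∇F_g(x)‖ ≤ δ_k for all x, where F_g : ℝ^d → ℝ is differentiable and M-Lipschitz continuous (|F_g(w) − F_g(v)| ≤ M·‖w − v‖ for all w, v), and let p_k ≥ 0 with ∑_{k∈K} p_k = 1 and ∑_{k∈K} p_k·δ_k ≤ δ. Starting from a common point w₀ ∈ ℝ^d, define for each k the sequence w^k(0) = w₀, w^k(e) = w^k(e−1) − η·∇F_k(w^k(e−1)), the virtual sequence v(0) = w₀, v(e) = v(e−1) − η·∇F_g(v(e−1)), and the aggregated group model w_g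 := ∑_{k∈K} p_k · w^k(E). Then |F_g(w_g) − F_g(v(E))| ≤ (δ·M/L)·((η·L + 1)^E − 1). -/
open scoped BigOperators

/-- Theorem 1 (Eq. (18)): convergence bound of FlexCFL without inter-group aggregation. -/
theorem flexcfl_convergence_bound (d : ℕ) (hd : 0 < d) (K : Type) [Fintype K]
    [Nonempty K] (η L M δ : ℝ) (E : ℕ) (hη : 0 < η) (hL : 0 < L) (hM : 0 ≤ M)
    (F : K → EuclideanSpace ℝ (Fin d) → ℝ) (Fg : EuclideanSpace ℝ (Fin d) → ℝ)
    (δk : K → ℝ) (p : K → ℝ)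
    (hdiffk : ∀ k, Differentiable ℝ (F k)) (hdiffg : Differentiable ℝ Fg)
    (hgradlip : ∀ k, ∀ w v : EuclideanSpace ℝ (Fin d),
      ‖gradient (F k) w - gradient (F k) v‖ ≤ L * ‖w - v‖)
    (hδk : ∀ k, 0 ≤ δk k)
    (hdiv : ∀ k, ∀ x : EuclideanSpace ℝ (Fin d), ‖gradient (F k) x - gradient Fg x‖ ≤ δk k)
    (hFgLip : ∀ w v : EuclideanSpace ℝ (Fin d), |Fg w - Fg v| ≤ M * ‖w - v‖)
    (hp : ∀ k, 0 ≤ p k) (hpsum : ∑ k, p k = 1) (hδ : ∑ k, p k * δk k ≤ δ)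
    (w₀ : EuclideanSpace ℝ (Fin d)) (w : K → ℕ → EuclideanSpace ℝ (Fin d))
    (v : ℕ → EuclideanSpace ℝ (Fin d))
    (hw0 : ∀ k, w k 0 = w₀) (hv0 : v 0 = w₀)
    (hw : ∀ k, ∀ e : ℕ, w k (e + 1) = w k e - η • gradient (F k) (w k e))
    (hv : ∀ e : ℕ, v (e + 1) = v e - η • gradient Fg (v e)) :
    |Fg (∑ k, p k • w k E) - Fg (v E)| ≤ (δ * M / L) * ((η * L + 1) ^ E - 1) := by
  set r : ℝ := η * L + 1 with hr
  have hr1 : (1:ℝ) ≤ r := by nlinarith [mul_pos hη hL]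
  have hrne : r ≠ 1 := by nlinarith [mul_pos hη hL]
  have hSnn : ∀ n : ℕ, 0 ≤ ∑ i ∈ Finset.range n, r ^ i := by
    intro n
    exact Finset.sum_nonneg fun i _ => pow_nonneg (by linarith) i
  -- key induction
  have key : ∀ k, ∀ e : ℕ, ‖w k e - v e‖ ≤ η * δk k * ∑ i ∈ Finset.range e, r ^ i := by
    intro k e
    induction e with
    | zero => simp [hw0, hv0]
    | succ e ih =>
      have heq : w k (e+1) - v (e+1)
          = (w k e - v e) - η • (gradient (F k) (w k e) - gradient (F k) (v e))
            - η • (gradient (F k) (v e) - gradient Fg (v e)) := by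
        rw [hw, hv]
        simp [smul_sub]
        abel
      have hb : ‖η • (gradient (F k) (w k e) - gradient (F k) (v e))‖
          = η * ‖gradient (F k) (w k e) - gradient (F k) (v e)‖ := by
        rw [norm_smul, Real.norm_eq_abs, abs_of_pos hη]
      have hc : ‖η • (gradient (F k) (v e) - gradient Fg (v e))‖
          = η * ‖gradient (F k) (v e) - gradient Fg (v e)‖ := by
        rw [norm_smul, Real.norm_eq_abs, abs_of_pos hη]
      have h1 : ‖w k (e+1) - v (e+1)‖
          ≤ ‖w k e - v e‖ + η * ‖gradient (F k) (w k e) - gradient (F k) (v e)‖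
            + η * ‖gradient (F k) (v e) - gradient Fg (v e)‖ := by
        rw [heq]
        have t1 := norm_sub_le ((w k e - v e) - η • (gradient (F k) (w k e) - gradient (F k) (v e)))
          (η • (gradient (F k) (v e) - gradient Fg (v e)))
        have t2 := norm_sub_le (w k e - v e) (η • (gradient (F k) (w k e) - gradient (F k) (v e)))
        rw [hb] at t2; rw [hc] at t1
        linarith
      have h2 := hgradlip k (w k e) (v e)
      have h3 := hdiv k (v e)
      have h4 : ‖w k (e+1) - v (e+1)‖ ≤ r * ‖w k e - v e‖ + η * δk k := by
        have ha2 : η * ‖gradient (F k) (w k e) - gradient (F k) (v e)‖ ≤ η * (L * ‖w k e - v e‖) :=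
          mul_le_mul_of_nonneg_left h2 hη.le
        have ha3 : η * ‖gradient (F k) (v e) - gradient Fg (v e)‖ ≤ η * δk k :=
          mul_le_mul_of_nonneg_left h3 hη.le
        rw [hr]
        nlinarith [h1, ha2, ha3]
      have h5 : r * ‖w k e - v e‖ ≤ r * (η * δk k * ∑ i ∈ Finset.range e, r ^ i) :=
        mul_le_mul_of_nonneg_left ih (by linarith)
      calc ‖w k (e+1) - v (e+1)‖ ≤ r * (η * δk k * ∑ i ∈ Finset.range e, r ^ i) + η * δk k := by
            linarith
        _ = η * δk k * ∑ i ∈ Finset.range (e+1), r ^ i := by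
            rw [geom_sum_succ]; ring
  -- aggregate
  have hagg : ‖(∑ k, p k • w k E) - v E‖ ≤ η * (∑ i ∈ Finset.range E, r ^ i) * δ := by
    have hrw : (∑ k, p k • w k E) - v E = ∑ k, p k • (w k E - v E) := by
      have : ∑ k, p k • (w k E - v E) = (∑ k, p k • w k E) - v E := by
        simp only [smul_sub]
        rw [Finset.sum_sub_distrib, ← Finset.sum_smul, hpsum, one_smul]
      exact this.symm
    rw [hrw]
    calc ‖∑ k, p k • (w k E - v E)‖ ≤ ∑ k, ‖p k • (w k E - v E)‖ := norm_sum_le _ _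
      _ ≤ ∑ k, p k * (η * δk k * ∑ i ∈ Finset.range E, r ^ i) := by
          apply Finset.sum_le_sum
          intro k _
          rw [norm_smul, Real.norm_eq_abs, abs_of_nonneg (hp k)]
          exact mul_le_mul_of_nonneg_left (key k E) (hp k)
      _ = η * (∑ i ∈ Finset.range E, r ^ i) * ∑ k, p k * δk k := by
          rw [Finset.mul_sum]; congr 1; ext k; ring
      _ ≤ η * (∑ i ∈ Finset.range E, r ^ i) * δ := by
          apply mul_le_mul_of_nonneg_left hδ
          exact mul_nonneg hη.le (hSnn E)
  have hgeom : (∑ i ∈ Finset.range E, r ^ i) = (r ^ E - 1) / (η * L) := by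
    rw [geom_sum_eq hrne]
    congr 1
    rw [hr]; ring
  calc |Fg (∑ k, p k • w k E) - Fg (v E)| ≤ M * ‖(∑ k, p k • w k E) - v E‖ := hFgLip _ _
    _ ≤ M * (η * (∑ i ∈ Finset.range E, r ^ i) * δ) := mul_le_mul_of_nonneg_left hagg hM
    _ = (δ * M / L) * (r ^ E - 1) := by
        rw [hgeom]
        field_simp
    _ = (δ * M / L) * ((η * L + 1) ^ E - 1) := by rw [hr]
end

section
/- Let d be a positive natural number, let K be a nonempty finite index set, let η > 0, L > 0, M ≥ 0, η_g ≥ 0, let E ∈ ℕ, and let J be a finite index set with, for each l ∈ J, a nonzero vector u_l ∈ ℝ^d. For each k ∈ K let F_k : ℝ^d → ℝ be differentiable with L-Lipschitz gradient, let δ_k ≥ 0 satisfy ‖∇F_k(x) − ∇F_g(x)‖ ≤ δ_k for all x, where F_g : ℝ^d → ℝ is differentiable and M-Lipschitz continuous, and let p_k ≥ 0 with ∑_{k∈K} p_k = 1 and ∑_{k∈K} p_k·δ_k ≤ δ. Starting from a common point w₀ ∈ ℝ^d, define for each k the sequence w^k(0) = w₀, w^k(e) = w^k(e−1) − η·∇F_k(w^k(e−1)),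 the virtual sequence v(0) = w₀, v(e) = v(e−1) − η·∇F_g(v(e−1)), the aggregated group model w_g := ∑_{k∈K} p_k · w^k(E), and the inter-group aggregated model w̃_g := w_g + η_g · ∑_{l∈J} u_l/‖u_l‖. Then |F_g(w̃_g) − F_g(v(E))| ≤ M·( (δ/L)·((η·L + 1)^E − 1) + η_g·|J| ). -/
open scoped BigOperators

/-- Eq. (21): convergence bound of FlexCFL with inter-group aggregation. -/
theorem flexcfl_convergence_bound_inter_group (d : ℕ) (hd : 0 < d) (K : Type) [Fintype K]
    [Nonempty K] (η L M ηg δ : ℝ) (E : ℕ) (hη : 0 < η) (hL : 0 < L) (hM : 0 ≤ M)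
    (hηg : 0 ≤ ηg) (J : Type) [Fintype J] (u : J → EuclideanSpace ℝ (Fin d))
    (hu : ∀ l, u l ≠ 0)
    (F : K → EuclideanSpace ℝ (Fin d) → ℝ) (Fg : EuclideanSpace ℝ (Fin d) → ℝ)
    (δk : K → ℝ) (p : K → ℝ)
    (hdiffk : ∀ k, Differentiable ℝ (F k)) (hdiffg : Differentiable ℝ Fg)
    (hgradlip : ∀ k, ∀ w v : EuclideanSpace ℝ (Fin d),
      ‖gradient (F k) w - gradient (F k) v‖ ≤ L * ‖w - v‖)
    (hδk : ∀ k, 0 ≤ δk k)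
    (hdiv : ∀ k, ∀ x : EuclideanSpace ℝ (Fin d), ‖gradient (F k) x - gradient Fg x‖ ≤ δk k)
    (hFgLip : ∀ w v : EuclideanSpace ℝ (Fin d), |Fg w - Fg v| ≤ M * ‖w - v‖)
    (hp : ∀ k, 0 ≤ p k) (hpsum : ∑ k, p k = 1) (hδ : ∑ k, p k * δk k ≤ δ)
    (w₀ : EuclideanSpace ℝ (Fin d)) (w : K → ℕ → EuclideanSpace ℝ (Fin d))
    (v : ℕ → EuclideanSpace ℝ (Fin d))
    (hw0 : ∀ k, w k 0 = w₀) (hv0 : v 0 = w₀)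
    (hw : ∀ k, ∀ e : ℕ, w k (e + 1) = w k e - η • gradient (F k) (w k e))
    (hv : ∀ e : ℕ, v (e + 1) = v e - η • gradient Fg (v e)) :
    |Fg ((∑ k, p k • w k E) + ηg • ∑ l, ‖u l‖⁻¹ • u l) - Fg (v E)| ≤
      M * ((δ / L) * ((η * L + 1) ^ E - 1) + ηg * (Fintype.card J)) := by
  -- Per-client bound by induction
  have key : ∀ k (e : ℕ), ‖w k e - v e‖ ≤ (δk k / L) * ((η * L + 1) ^ e - 1) := by
    intro k e
    induction e with
    | zero => simp [hw0, hv0]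
    | succ e ih =>
      have hstep : w k (e + 1) - v (e + 1)
          = (w k e - v e) - η • (gradient (F k) (w k e) - gradient Fg (v e)) := by
        rw [hw, hv, smul_sub]; abel
      have h1 : ‖gradient (F k) (w k e) - gradient Fg (v e)‖
          ≤ L * ‖w k e - v e‖ + δk k := by
        calc ‖gradient (F k) (w k e) - gradient Fg (v e)‖
            ≤ ‖gradient (F k) (w k e) - gradient (F k) (v e)‖
              + ‖gradient (F k) (v e) - gradient Fg (v e)‖ := by
              have := norm_sub_le_norm_sub_add_norm_sub (gradient (F k) (w k e))
                (gradient (F k) (v e)) (gradient Fg (v e))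
              exact this
          _ ≤ L * ‖w k e - v e‖ + δk k := add_le_add (hgradlip k _ _) (hdiv k _)
      calc ‖w k (e + 1) - v (e + 1)‖
          ≤ ‖w k e - v e‖ + η * ‖gradient (F k) (w k e) - gradient Fg (v e)‖ := by
            rw [hstep]
            refine (norm_sub_le _ _).trans ?_
            rw [norm_smul, Real.norm_eq_abs, abs_of_pos hη]
        _ ≤ ‖w k e - v e‖ + η * (L * ‖w k e - v e‖ + δk k) := by
            have := mul_le_mul_of_nonneg_left h1 hη.le
            linarith
        _ = (1 + η * L) * ‖w k e - v e‖ + η * δk k := by ring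
        _ ≤ (1 + η * L) * ((δk k / L) * ((η * L + 1) ^ e - 1)) + η * δk k := by
            have hpos : (0:ℝ) ≤ 1 + η * L := by positivity
            nlinarith [mul_le_mul_of_nonneg_left ih hpos]
        _ = (δk k / L) * ((η * L + 1) ^ (e + 1) - 1) := by
            field_simp
            ring
  have hone : (1:ℝ) ≤ η * L + 1 := by nlinarith
  have hCnn : (0:ℝ) ≤ (η * L + 1) ^ E - 1 := by
    have := one_le_pow₀ hone (n := E)
    linarith
  -- Norm of the difference
  have hsum : ‖(∑ k, p k • w k E) - v E‖ ≤ (δ / L) * ((η * L + 1) ^ E - 1) := by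
    have hrw : (∑ k, p k • w k E) - v E = ∑ k, p k • (w k E - v E) := by
      simp only [smul_sub, Finset.sum_sub_distrib, ← Finset.sum_smul, hpsum, one_smul]
    rw [hrw]
    calc ‖∑ k, p k • (w k E - v E)‖ ≤ ∑ k, ‖p k • (w k E - v E)‖ := norm_sum_le _ _
      _ ≤ ∑ k, p k * ((δk k / L) * ((η * L + 1) ^ E - 1)) := by
          refine Finset.sum_le_sum fun k _ => ?_
          rw [norm_smul, Real.norm_eq_abs, abs_of_nonneg (hp k)]
          exact mul_le_mul_of_nonneg_left (key k E) (hp k)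
      _ = (∑ k, p k * δk k) * (((η * L + 1) ^ E - 1) / L) := by
          rw [Finset.sum_mul]
          refine Finset.sum_congr rfl fun k _ => ?_
          field_simp
      _ ≤ δ * (((η * L + 1) ^ E - 1) / L) := by
          refine mul_le_mul_of_nonneg_right hδ ?_
          positivity
      _ = (δ / L) * ((η * L + 1) ^ E - 1) := by ring
  have hunit : ‖ηg • ∑ l, ‖u l‖⁻¹ • u l‖ ≤ ηg * (Fintype.card J) := by
    rw [norm_smul, Real.norm_eq_abs, abs_of_nonneg hηg]
    refine mul_le_mul_of_nonneg_left ?_ hηg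
    calc ‖∑ l, ‖u l‖⁻¹ • u l‖ ≤ ∑ l : J, ‖(‖u l‖⁻¹ • u l)‖ := norm_sum_le _ _
      _ = ∑ l : J, (1:ℝ) := by
          refine Finset.sum_congr rfl fun l _ => ?_
          rw [norm_smul, norm_inv, norm_norm, inv_mul_cancel₀ (norm_ne_zero_iff.mpr (hu l))]
      _ = Fintype.card J := by simp
  calc |Fg ((∑ k, p k • w k E) + ηg • ∑ l, ‖u l‖⁻¹ • u l) - Fg (v E)|
      ≤ M * ‖((∑ k, p k • w k E) + ηg • ∑ l, ‖u l‖⁻¹ • u l) - v E‖ := hFgLip _ _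
    _ ≤ M * ((δ / L) * ((η * L + 1) ^ E - 1) + ηg * (Fintype.card J)) := by
        refine mul_le_mul_of_nonneg_left ?_ hM
        calc ‖((∑ k, p k • w k E) + ηg • ∑ l, ‖u l‖⁻¹ • u l) - v E‖
            = ‖((∑ k, p k • w k E) - v E) + ηg • ∑ l, ‖u l‖⁻¹ • u l‖ := by
              congr 1; abel
          _ ≤ ‖(∑ k, p k • w k E) - v E‖ + ‖ηg • ∑ l, ‖u l‖⁻¹ • u l‖ := norm_add_le _ _
          _ ≤ (δ / L) * ((η * L + 1) ^ E - 1) + ηg * (Fintype.card J) :=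
              add_le_add hsum hunit
end
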